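/- arXiv:2008.07151 — 3 statements merged into one kernel-verified Lean document; each statement's English description precedes it below -/
import Mathlib

section
/- The cubic equation λ³ + (r+γ)λ² + (1+γ)rλ + (γ-1)r = 0, where r = |ξ|² > 0 and γ > 1, has no purely imaginary nonzero roots: there is no real d ≠ 0 such that λ = id is a root. -/
open Complex

/-- The cubic λ³ + (r+γ)λ² + (1+γ)rλ + (γ-1)r with r > 0, γ > 1 has no purely
imaginary nonzero root. -/
theorem stmt_2 (γ r : ℝ) (hγ : 1 < γ) (hr : 0 < r) (d : ℝ) (hd : d ≠ 0) :
    (Complex.I * d)^3 + ((r : ℂ) + γ) * (Complex.I * d)^2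
      + (1 + (γ : ℂ)) * r * (Complex.I * d) + ((γ : ℂ) - 1) * r ≠ 0 := by
  intro h
  have hre := congrArg Complex.re h
  have him := congrArg Complex.im h
  simp [Complex.ext_iff, pow_succ, Complex.add_re, Complex.mul_re, Complex.mul_im] at hre him
  have hd2 : 0 < d^2 := by positivity
  have h2 : d * ((1 + γ) * r - d * d) = 0 := by ring_nf; linarith [him]
  have h3 : d * d = (1 + γ) * r := by
    rcases mul_eq_zero.1 h2 with h | h
    · exact absurd h hd
    · linarith
  rw [h3] at hre
  nlinarith
end

section
/- For γ > 1 and any exponents s ≥ 0, n ≥ 1 with 2s + n ≥ 3, there is a constant C > 0 such that (∫_{0 < |ξ| < ε} |ξ|^{2s-2} |sin(γ̃|ξ|t)|² e^{-c|ξ|²t} dξ)^{1/2} ≤ C(1+t)^{1/2 - s/2 - n/4} for all t ≥ 0, where γ̃ = √((γ-1)/γ) and c = (γ²+1)/(2γ²). -/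
open MeasureTheory Real Set Metric Module

/-!
Since `sin² ≤ 1`, in polar coordinates the integrand is at most `r ^ (2s + n - 3) e^{-c r² t}`.
For `r < ε` one may trade `e^{-c r² t}` for `e^{c ε²} e^{-c (1 + t) r²}`; the moment of the
latter over all of `(0, ∞)` is a Gamma integral, a constant times
`(c (1 + t)) ^ (-(2s + n - 2)/2)`, and the square root of this is the claimed rate.
-/

theorem setIntegral_rpow_mul_exp_neg_mul_sq_le {S : Set ℝ} (hS0 : S ⊆ Ioi 0) {q b : ℝ}
    (hq : -1 < q) (hb : 0 < b) :
    ∫ r in S, r ^ q * exp (-b * r ^ 2) ≤ b ^ (-(q + 1) / 2) * (1 / 2) * Gamma ((q + 1) / 2) := by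
  calc ∫ r in S, r ^ q * exp (-b * r ^ 2) ≤ ∫ r in Ioi 0, r ^ q * exp (-b * r ^ 2) :=
        setIntegral_mono_set (integrableOn_rpow_mul_exp_neg_mul_sq hb hq)
          (ae_restrict_of_forall_mem measurableSet_Ioi fun r (hr : 0 < r) => by positivity)
          hS0.eventuallyLE
    _ = _ := by
        simp_rw [← rpow_two]
        exact integral_rpow_mul_exp_neg_mul_rpow two_pos hq hb

theorem pow_mul_rpow_mul_sin_sq_mul_exp_le {d : ℕ} (hd : 1 ≤ d) {r ε c : ℝ} (hr : 0 < r)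
    (hrε : r ≤ ε) (hc : 0 ≤ c) (s ω t : ℝ) :
    r ^ (d - 1) * (r ^ (2 * s - 2) * sin (ω * r * t) ^ 2 * exp (-c * r ^ 2 * t)) ≤
      exp (c * ε ^ 2) * (r ^ (2 * s + d - 3) * exp (-(c * (1 + t)) * r ^ 2)) := by
  have hpow : r ^ (d - 1) * r ^ (2 * s - 2) = r ^ (2 * s + d - 3) := by
    rw [← rpow_natCast, ← rpow_add hr, Nat.cast_sub hd]
    ring_nf
  have hexp : exp (-c * r ^ 2 * t) ≤ exp (c * ε ^ 2) * exp (-(c * (1 + t)) * r ^ 2) := by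
    rw [← exp_add, exp_le_exp]
    nlinarith [mul_le_mul_of_nonneg_left (pow_le_pow_left₀ hr.le hrε 2) hc]
  calc r ^ (d - 1) * (r ^ (2 * s - 2) * sin (ω * r * t) ^ 2 * exp (-c * r ^ 2 * t))
      = r ^ (2 * s + d - 3) * exp (-c * r ^ 2 * t) * sin (ω * r * t) ^ 2 := by
        rw [← hpow]; ring
    _ ≤ r ^ (2 * s + d - 3) * (exp (c * ε ^ 2) * exp (-(c * (1 + t)) * r ^ 2)) * 1 := by
        gcongr
        exact sin_sq_le_one _
    _ = exp (c * ε ^ 2) * (r ^ (2 * s + d - 3) * exp (-(c * (1 + t)) * r ^ 2)) := by ring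

section Radial

variable {E : Type*} [NormedAddCommGroup E] [NormedSpace ℝ E] [MeasurableSpace E] [BorelSpace E]
  [FiniteDimensional ℝ E] [Nontrivial E] (μ : Measure E) [μ.IsAddHaarMeasure]

theorem setIntegral_fun_norm_preimage_addHaar {F : Type*} [NormedAddCommGroup F] [NormedSpace ℝ F]
    {S : Set ℝ} (hS : MeasurableSet S) (hS0 : S ⊆ Ioi 0) (f : ℝ → F) :
    ∫ x in (‖·‖) ⁻¹' S, f ‖x‖ ∂μ =
      finrank ℝ E • μ.real (ball 0 1) • ∫ r in S, r ^ (finrank ℝ E - 1) • f r := by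
  have hradial : ∀ r : ℝ, r ^ (finrank ℝ E - 1) • S.indicator f r
      = S.indicator (fun r => r ^ (finrank ℝ E - 1) • f r) r := fun r => by
    by_cases hr : r ∈ S <;> simp [hr]
  have hcomp : ∀ x : E, ((‖·‖) ⁻¹' S).indicator (fun x => f ‖x‖) x = S.indicator f ‖x‖ :=
    fun x => indicator_comp_right (g := f) (‖·‖)
  rw [← integral_indicator (measurable_norm hS)]
  simp_rw [hcomp]
  rw [integral_fun_norm_addHaar μ (S.indicator f)]
  simp_rw [hradial]
  rw [integral_indicator hS, Measure.restrict_restrict hS, inter_eq_left.mpr hS0]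

theorem setIntegral_norm_pow_mul_rpow_mul_sin_sq_mul_exp_le {s c : ℝ}
    (hs : 2 < 2 * s + finrank ℝ E) (hc : 0 < c) (ε ω : ℝ) {t : ℝ} (ht : -1 < t) :
    ∫ ξ in (‖·‖ : E → ℝ) ⁻¹' Ioo 0 ε,
        ‖ξ‖ ^ (2 * s - 2) * sin (ω * ‖ξ‖ * t) ^ 2 * exp (-c * ‖ξ‖ ^ 2 * t) ∂μ ≤
      finrank ℝ E * μ.real (ball 0 1) * exp (c * ε ^ 2) *
        (c ^ (-(2 * s + finrank ℝ E - 2) / 2) * (1 / 2) * Gamma ((2 * s + finrank ℝ E - 2) / 2)) *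
        (1 + t) ^ (-(2 * s + finrank ℝ E - 2) / 2) := by
  set d := finrank ℝ E
  set q := 2 * s + d - 3
  have hq : -1 < q := by linarith
  have hqa : q + 1 = 2 * s + d - 2 := by ring
  have hb : 0 < c * (1 + t) := mul_pos hc (by linarith)
  have hradial : ∫ r in Ioo 0 ε, r ^ (d - 1) •
        (r ^ (2 * s - 2) * sin (ω * r * t) ^ 2 * exp (-c * r ^ 2 * t)) ≤
      exp (c * ε ^ 2) * ((c * (1 + t)) ^ (-(q + 1) / 2) * (1 / 2) * Gamma ((q + 1) / 2)) :=
    calc _ ≤ ∫ r in Ioo 0 ε, exp (c * ε ^ 2) * (r ^ q * exp (-(c * (1 + t)) * r ^ 2)) :=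
          integral_mono_of_nonneg
            (ae_restrict_of_forall_mem measurableSet_Ioo fun r ⟨(hr : 0 < r), _⟩ => by
              positivity)
            (((integrableOn_rpow_mul_exp_neg_mul_sq hb hq).mono_set
              Ioo_subset_Ioi_self).const_mul _)
            (ae_restrict_of_forall_mem measurableSet_Ioo fun r hr =>
              pow_mul_rpow_mul_sin_sq_mul_exp_le finrank_pos hr.1 hr.2.le hc.le _ _ _)
      _ = exp (c * ε ^ 2) * ∫ r in Ioo 0 ε, r ^ q * exp (-(c * (1 + t)) * r ^ 2) :=
          integral_const_mul _ _
      _ ≤ _ := by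
          gcongr
          exact setIntegral_rpow_mul_exp_neg_mul_sq_le Ioo_subset_Ioi_self hq hb
  rw [setIntegral_fun_norm_preimage_addHaar μ measurableSet_Ioo Ioo_subset_Ioi_self
    (fun r => r ^ (2 * s - 2) * sin (ω * r * t) ^ 2 * exp (-c * r ^ 2 * t)), nsmul_eq_mul,
    smul_eq_mul]
  calc _ ≤ d * (μ.real (ball 0 1) * (exp (c * ε ^ 2) *
          ((c * (1 + t)) ^ (-(q + 1) / 2) * (1 / 2) * Gamma ((q + 1) / 2)))) := by
        gcongr
    _ = _ := by
        rw [mul_rpow hc.le (by linarith), hqa]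
        ring

end Radial

theorem stmt_6_general (n : ℕ) (hn : 1 ≤ n) (s γ ε : ℝ)
    (hsn : 3 ≤ 2*s + n) (hγ : 1 < γ) :
    ∃ C > 0, ∀ t : ℝ, 0 ≤ t →
      (∫ ξ in {ξ : EuclideanSpace ℝ (Fin n) | 0 < ‖ξ‖ ∧ ‖ξ‖ < ε},
          ‖ξ‖ ^ (2*s - 2) * Real.sin (Real.sqrt ((γ - 1)/γ) * ‖ξ‖ * t)^2
            * Real.exp (-((γ^2 + 1)/(2*γ^2)) * ‖ξ‖^2 * t)) ^ ((1 : ℝ)/2)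
        ≤ C * (1 + t) ^ ((1 : ℝ)/2 - s/2 - (n : ℝ)/4) := by
  have : Nontrivial (EuclideanSpace ℝ (Fin n)) :=
    nontrivial_of_finrank_pos (R := ℝ) (by rw [finrank_euclideanSpace_fin]; omega)
  set c := (γ ^ 2 + 1) / (2 * γ ^ 2)
  have hc : 0 < c := by positivity
  set a := (2 * s + n - 2) / 2 with ha_def
  set K := n * volume.real (ball (0 : EuclideanSpace ℝ (Fin n)) 1) * exp (c * ε ^ 2) *
    (c ^ (-a) * (1 / 2) * Gamma a)
  have hK : 0 < K := by
    have hV := ENNReal.toReal_pos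
      (measure_ball_pos volume (0 : EuclideanSpace ℝ (Fin n)) one_pos).ne' measure_ball_lt_top.ne
    have := Gamma_pos_of_pos (show 0 < a by rw [ha_def]; linarith)
    positivity
  refine ⟨K ^ (1 / 2 : ℝ), by positivity, fun t ht => ?_⟩
  have hbound := setIntegral_norm_pow_mul_rpow_mul_sin_sq_mul_exp_le volume
    (s := s) (by rw [finrank_euclideanSpace_fin]; linarith) hc ε √((γ - 1) / γ) (t := t)
    (by linarith)
  simp only [finrank_euclideanSpace_fin, neg_div] at hbound
  calc _ ≤ (K * (1 + t) ^ (-a)) ^ (1 / 2 : ℝ) := by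
        gcongr
        exact hbound
    _ = K ^ (1 / 2 : ℝ) * (1 + t) ^ (1 / 2 - s / 2 - n / 4 : ℝ) := by
        rw [mul_rpow hK.le (by positivity), ← rpow_mul (by positivity), ha_def]
        ring_nf

/-- Low-frequency kernel estimate with sin, case 2s + n ≥ 3. -/
theorem stmt_6 (n : ℕ) (hn : 1 ≤ n) (s γ ε : ℝ) (hs : 0 ≤ s)
    (hsn : 3 ≤ 2*s + n) (hγ : 1 < γ) (hε : ε ∈ Set.Ioo (0 : ℝ) 1) :
    ∃ C > 0, ∀ t : ℝ, 0 ≤ t →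
      (∫ ξ in {ξ : EuclideanSpace ℝ (Fin n) | 0 < ‖ξ‖ ∧ ‖ξ‖ < ε},
          ‖ξ‖ ^ (2*s - 2) * Real.sin (Real.sqrt ((γ - 1)/γ) * ‖ξ‖ * t)^2
            * Real.exp (-((γ^2 + 1)/(2*γ^2)) * ‖ξ‖^2 * t)) ^ ((1 : ℝ)/2)
        ≤ C * (1 + t) ^ ((1 : ℝ)/2 - s/2 - (n : ℝ)/4) :=
  stmt_6_general n hn s γ ε hsn hγ
end

section
/- For γ̃ > 0, c > 0, n ≥ 1 and ε > 0, there exist constants C > 0 and T ≥ 1 such that for all t ≥ T, (∫_{|ξ|<ε} cos²(γ̃|ξ|t) e^{-2c|ξ|²t} dξ)^{1/2} ≥ C t^{-n/4}. -/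
/-!
On the shell `1/√t < ‖ξ‖ < 2/√t`, which lies in the ball once `t` is large, the Gaussian factor
is at least `exp (-8c)`. In polar coordinates the shell contributes at least
`(1/√t)^(n-1) * ∫_{1/√t}^{2/√t} cos² (γ t r) dr`, and the oscillating factor averages to `1/2`
over this interval up to an error `O(1/(γ t))`, negligible against its length `1/√t`.
Hence the integral is `≳ t^(-n/2)`.
-/

open MeasureTheory Metric Set Real Module

theorem le_mul_sqrt_of_div_sq_le {a k t : ℝ} (ha : 0 < a) (h : (k / a) ^ 2 ≤ t) :
    k ≤ a * √t := by
  rw [← div_le_iff₀' ha]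
  exact (le_abs_self _).trans (abs_le_sqrt h)

theorem integral_cos_mul_sq_ge {ω : ℝ} (hω : 0 < ω) (a b : ℝ) :
    (b - a) / 2 - 1 / ω ≤ ∫ y in a..b, cos (ω * y) ^ 2 := by
  rw [intervalIntegral.integral_comp_mul_left (fun u => cos u ^ 2) hω.ne', integral_cos_sq,
    smul_eq_mul]
  have hcs (x : ℝ) : |cos x * sin x| ≤ 1 := by
    rw [abs_mul]; exact mul_le_one₀ (abs_cos_le_one x) (abs_nonneg _) (abs_sin_le_one x)
  have hb := abs_le.1 (hcs (ω * b))
  have ha := abs_le.1 (hcs (ω * a))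
  rw [div_sub_div _ _ two_ne_zero hω.ne', inv_mul_eq_div, div_le_div_iff₀ (by positivity) hω]
  nlinarith

section Radial

variable {E : Type*} [NormedAddCommGroup E] [NormedSpace ℝ E] [FiniteDimensional ℝ E]
  [MeasurableSpace E] [BorelSpace E] [Nontrivial E] (μ : Measure E) [μ.IsAddHaarMeasure]

theorem setIntegral_ball_fun_norm (f : ℝ → ℝ) (R : ℝ) :
    ∫ x in ball 0 R, f ‖x‖ ∂μ =
      finrank ℝ E * μ.real (ball 0 1) * ∫ r in Ioo 0 R, r ^ (finrank ℝ E - 1) * f r := by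
  have hball : ball (0 : E) R = (‖·‖) ⁻¹' Iio R := by ext; simp
  rw [← integral_indicator measurableSet_ball, hball]
  change ∫ x, (Iio R).indicator f ‖x‖ ∂μ = _
  rw [integral_fun_norm_addHaar μ, nsmul_eq_mul, smul_eq_mul, mul_assoc, ← Ioi_inter_Iio,
    ← setIntegral_indicator measurableSet_Iio]
  congr 3 with y
  simp only [smul_eq_mul, indicator_mul_right]

theorem pow_mul_intervalIntegral_le_setIntegral_Ioo {f : ℝ → ℝ} (hf : Continuous f)
    (hf0 : ∀ r, 0 ≤ f r) {a b R : ℝ} (ha : 0 ≤ a) (hab : a ≤ b) (hbR : b ≤ R) (k : ℕ) :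
    a ^ k * ∫ r in a..b, f r ≤ ∫ r in Ioo 0 R, r ^ k * f r := by
  have hint : IntegrableOn (fun r => r ^ k * f r) (Icc 0 R) :=
    (by fun_prop : Continuous fun r => r ^ k * f r).integrableOn_Icc
  rw [intervalIntegral.integral_of_le hab, integral_Ioc_eq_integral_Ioo,
    ← integral_const_mul]
  calc ∫ r in Ioo a b, a ^ k * f r
      ≤ ∫ r in Ioo a b, r ^ k * f r := by
        refine setIntegral_mono_on
          ((hf.integrableOn_Icc.mono_set Ioo_subset_Icc_self).const_mul _)
          (hint.mono_set (Ioo_subset_Ioo ha hbR |>.trans Ioo_subset_Icc_self))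
          measurableSet_Ioo fun r hr => ?_
        gcongr
        exacts [hf0 r, hr.1.le]
    _ ≤ ∫ r in Ioo 0 R, r ^ k * f r :=
        setIntegral_mono_set (hint.mono_set Ioo_subset_Icc_self)
          ((ae_restrict_mem measurableSet_Ioo).mono fun r hr =>
            mul_nonneg (pow_nonneg hr.1.le _) (hf0 r))
          (Ioo_subset_Ioo ha hbR).eventuallyLE

theorem le_setIntegral_ball_cos_sq_mul_exp {γ c t ε : ℝ} (hc : 0 ≤ c) (ht : 0 < t)
    (hεt : 2 ≤ ε * √t) (hγt : 4 ≤ γ * √t) :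
    finrank ℝ E * μ.real (ball 0 1) * exp (-(8 * c)) / 4 * t ^ (-(finrank ℝ E : ℝ) / 2) ≤
      ∫ ξ in ball 0 ε, cos (γ * ‖ξ‖ * t) ^ 2 * exp (-2 * c * ‖ξ‖ ^ 2 * t) ∂μ := by
  have hs : 0 < √t := sqrt_pos.2 ht
  have hpow : t ^ (-(finrank ℝ E : ℝ) / 2) = (√t)⁻¹ ^ (finrank ℝ E - 1) * (√t)⁻¹ := by
    rw [← pow_succ, Nat.sub_add_cancel finrank_pos, sqrt_eq_rpow, ← rpow_neg ht.le,
      ← rpow_natCast, ← rpow_mul ht.le]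
    ring_nf
  set d := finrank ℝ E
  set s := √t
  set F : ℝ → ℝ := fun r => cos (γ * r * t) ^ 2 * exp (-2 * c * r ^ 2 * t)
  have hst : s ^ 2 = t := sq_sqrt ht.le
  have hγ : 0 < γ := by nlinarith
  have hgap : 1 / (4 * s) ≤ (2 * s⁻¹ - s⁻¹) / 2 - 1 / (γ * t) := by
    rw [← hst]
    field_simp
    nlinarith
  have hbε : 2 * s⁻¹ ≤ ε := by
    rw [← div_eq_mul_inv, div_le_iff₀ hs]; exact hεt
  have hF : ∀ r ∈ Icc s⁻¹ (2 * s⁻¹), exp (-(8 * c)) * cos ((γ * t) * r) ^ 2 ≤ F r := by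
    intro r hr
    have hrt : r ^ 2 * t ≤ 4 := by
      rw [← hst]
      calc r ^ 2 * s ^ 2 ≤ (2 * s⁻¹) ^ 2 * s ^ 2 := by
            gcongr; exacts [(inv_pos.2 hs).le.trans hr.1, hr.2]
        _ = 4 := by field_simp; norm_num
    rw [mul_comm, mul_right_comm γ t r]
    show _ ≤ cos (γ * r * t) ^ 2 * exp (-2 * c * r ^ 2 * t)
    gcongr
    nlinarith
  calc (d : ℝ) * μ.real (ball 0 1) * exp (-(8 * c)) / 4 * t ^ (-(d : ℝ) / 2)
      = d * μ.real (ball 0 1) * (s⁻¹ ^ (d - 1) * (exp (-(8 * c)) * (1 / (4 * s)))) := by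
        rw [hpow]; ring
    _ ≤ d * μ.real (ball 0 1) * (s⁻¹ ^ (d - 1) *
          (exp (-(8 * c)) * ((2 * s⁻¹ - s⁻¹) / 2 - 1 / (γ * t)))) := by gcongr
    _ ≤ d * μ.real (ball 0 1) * (s⁻¹ ^ (d - 1) *
          (exp (-(8 * c)) * ∫ r in s⁻¹..2 * s⁻¹, cos ((γ * t) * r) ^ 2)) := by
        gcongr; exact integral_cos_mul_sq_ge (by positivity) _ _
    _ ≤ d * μ.real (ball 0 1) * (s⁻¹ ^ (d - 1) * ∫ r in s⁻¹..2 * s⁻¹, F r) := by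
        rw [← intervalIntegral.integral_const_mul]
        gcongr
        refine intervalIntegral.integral_mono_on (by linarith [inv_pos.2 hs])
          (by apply Continuous.intervalIntegrable; fun_prop)
          (by apply Continuous.intervalIntegrable; fun_prop) hF
    _ ≤ d * μ.real (ball 0 1) * ∫ r in Ioo 0 ε, r ^ (d - 1) * F r := by
        gcongr
        exact pow_mul_intervalIntegral_le_setIntegral_Ioo (by fun_prop) (fun r => by positivity)
          (inv_pos.2 hs).le (by linarith [inv_pos.2 hs]) hbε _
    _ = ∫ ξ in ball 0 ε, F ‖ξ‖ ∂μ := (setIntegral_ball_fun_norm μ F ε).symm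

end Radial

/-- Lower bound for the diffusion-wave cosine kernel. -/
theorem stmt_15 (n : ℕ) (hn : 1 ≤ n) (γ' c ε : ℝ) (hγ' : 0 < γ') (hc : 0 < c)
    (hε : 0 < ε) :
    ∃ C > 0, ∃ T : ℝ, 1 ≤ T ∧ ∀ t : ℝ, T ≤ t →
      C * t ^ (-(n : ℝ)/4)
        ≤ (∫ ξ in Metric.ball (0 : EuclideanSpace ℝ (Fin n)) ε,
            Real.cos (γ' * ‖ξ‖ * t)^2 * Real.exp (-2*c*‖ξ‖^2*t)) ^ ((1 : ℝ)/2) := by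
  have : Nontrivial (EuclideanSpace ℝ (Fin n)) := by
    have : Nonempty (Fin n) := ⟨⟨0, hn⟩⟩
    infer_instance
  set K := n * volume.real (ball (0 : EuclideanSpace ℝ (Fin n)) 1) * exp (-(8 * c)) / 4
  have hK : 0 < K := by
    have : (0 : ℝ) < n := by exact_mod_cast hn
    have : 0 < volume.real (ball (0 : EuclideanSpace ℝ (Fin n)) 1) :=
      ENNReal.toReal_pos (measure_ball_pos _ _ one_pos).ne' measure_ball_lt_top.ne
    positivity
  refine ⟨K ^ ((1 : ℝ) / 2), by positivity, max 1 (max ((2 / ε) ^ 2) ((4 / γ') ^ 2)),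
    le_max_left _ _, fun t hT => ?_⟩
  have ht : 0 < t := one_pos.trans_le ((le_max_left _ _).trans hT)
  have key := le_setIntegral_ball_cos_sq_mul_exp
    (volume : Measure (EuclideanSpace ℝ (Fin n))) hc.le ht
    (le_mul_sqrt_of_div_sq_le hε (le_trans (by simp) hT))
    (le_mul_sqrt_of_div_sq_le hγ' (le_trans (by simp) hT))
  rw [finrank_euclideanSpace_fin] at key
  calc K ^ ((1 : ℝ) / 2) * t ^ (-(n : ℝ) / 4) = (K * t ^ (-(n : ℝ) / 2)) ^ ((1 : ℝ) / 2) := by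
        rw [mul_rpow hK.le (by positivity), ← rpow_mul ht.le]
        ring_nf
    _ ≤ _ := by gcongr
end
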